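/- arXiv:2603.02552 — 7 statements merged into one kernel-verified Lean document; each statement's English description precedes it below -/
import Mathlib

section
/- Let V : ℝ → M_{N×N}(ℂ) be differentiable with V(t)†·V(t) = I_N for all t, let L0 ∈ M_{N×K}(ℂ) satisfy L0†·L0 = I_K, and let h : ℝ → M_{K×K}(ℂ) be differentiable and satisfy the lift equation h'(t) = −(L0†·V(t)†·V'(t)·L0)·h(t) for all t. Then the curve L(t) = V(t)·L0·h(t) is horizontal: L(t)†·L'(t) = 0 for all t. -/
open Matrix

/-! The lift equation is chosen so that `h'` cancels the vertical part of the motion of the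
isometry `P = V·L0`: with `Pᴴ P = 1`, the product rule gives
`(P h)ᴴ (P h)' = hᴴ Pᴴ P' h + hᴴ Pᴴ P h' = hᴴ Pᴴ P' h - hᴴ Pᴴ P' h = 0`. -/

namespace Matrix

variable {m n p 𝕜 R : Type*} [Fintype n]
  [NontriviallyNormedField 𝕜] [NormedCommRing R] [NormedAlgebra 𝕜 R]

def HasEntrywiseDerivAt (A : 𝕜 → Matrix m n R) (A' : Matrix m n R) (t : 𝕜) : Prop :=
  ∀ i j, HasDerivAt (fun s => A s i j) (A' i j) t

theorem HasEntrywiseDerivAt.mul {A : 𝕜 → Matrix m n R} {B : 𝕜 → Matrix n p R}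
    {A' : Matrix m n R} {B' : Matrix n p R} {t : 𝕜}
    (hA : HasEntrywiseDerivAt A A' t) (hB : HasEntrywiseDerivAt B B' t) :
    HasEntrywiseDerivAt (fun s => A s * B s) (A' * B t + A t * B') t := by
  intro i j
  simp only [mul_apply, add_apply, ← Finset.sum_add_distrib]
  exact HasDerivAt.fun_sum fun k _ => (hA i k).mul (hB k j)

theorem HasEntrywiseDerivAt.mul_const {A : 𝕜 → Matrix m n R} {A' : Matrix m n R} {t : 𝕜}
    (hA : HasEntrywiseDerivAt A A' t) (C : Matrix n p R) :
    HasEntrywiseDerivAt (fun s => A s * C) (A' * C) t := by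
  intro i j
  simp only [mul_apply]
  exact HasDerivAt.fun_sum fun k _ => (hA i k).mul_const (C k j)

theorem conjTranspose_mul_self_mul_eq_one {m n R : Type*} [Fintype m] [DecidableEq m]
    [DecidableEq n] [Ring R] [StarRing R] {V : Matrix m m R} {L : Matrix m n R}
    (hV : Vᴴ * V = 1) (hL : Lᴴ * L = 1) : (V * L)ᴴ * (V * L) = 1 := by
  rw [conjTranspose_mul, Matrix.mul_assoc, ← Matrix.mul_assoc Vᴴ, hV, Matrix.one_mul, hL]

theorem conjTranspose_mul_lift_derivative_eq_zero {m n p R : Type*} [Fintype m] [Fintype n]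
    [DecidableEq n] [Ring R] [StarRing R] {P P' : Matrix m n R}
    (hP : Pᴴ * P = 1) (h : Matrix n p R) :
    (P * h)ᴴ * (P' * h + P * (-(Pᴴ * P') * h)) = 0 := by
  have hvert : Pᴴ * (P * (-(Pᴴ * P') * h)) = -(Pᴴ * (P' * h)) := by
    rw [← Matrix.mul_assoc, hP, Matrix.one_mul, Matrix.neg_mul, Matrix.mul_assoc]
  rw [conjTranspose_mul, Matrix.mul_add, Matrix.mul_assoc, Matrix.mul_assoc, hvert,
    ← Matrix.mul_add, add_neg_cancel, Matrix.mul_zero]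

end Matrix

theorem lift_equation_gives_horizontal_curve_general {N K : ℕ}
    (V V' : ℝ → Matrix (Fin N) (Fin N) ℂ)
    (hV : ∀ t i j, HasDerivAt (fun s => V s i j) (V' t i j) t)
    (hVunit : ∀ t, (V t)ᴴ * V t = 1)
    (L0 : Matrix (Fin N) (Fin K) ℂ) (hL0 : L0ᴴ * L0 = 1)
    (h : ℝ → Matrix (Fin K) (Fin K) ℂ)
    (hh : ∀ t i j, HasDerivAt (fun s => h s i j)
      ((-(L0ᴴ * (V t)ᴴ * V' t * L0) * h t) i j) t) :
    ∀ t : ℝ, ∃ L't : Matrix (Fin N) (Fin K) ℂ,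
      (∀ i j, HasDerivAt (fun s => (V s * L0 * h s) i j) (L't i j) t) ∧
      (V t * L0 * h t)ᴴ * L't = 0 := by
  intro t
  have hlift : -(L0ᴴ * (V t)ᴴ * V' t * L0) = -((V t * L0)ᴴ * (V' t * L0)) := by
    simp only [conjTranspose_mul, Matrix.mul_assoc]
  have hP : HasEntrywiseDerivAt (fun s => V s * L0) (V' t * L0) t :=
    HasEntrywiseDerivAt.mul_const (hV t) L0
  have hh' : HasEntrywiseDerivAt h (-((V t * L0)ᴴ * (V' t * L0)) * h t) t := by
    rw [← hlift]; exact hh t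
  exact ⟨_, hP.mul hh', conjTranspose_mul_lift_derivative_eq_zero
    (conjTranspose_mul_self_mul_eq_one (hVunit t) hL0) (h t)⟩

/-- If `h` solves the lift equation `h' = -(L0ᴴ Vᴴ V' L0) h` with `V` unitary and `L0`
having orthonormal columns, then the curve `L(t) = V(t)·L0·h(t)` is horizontal:
`L(t)ᴴ · L'(t) = 0` for all `t`. -/
theorem lift_equation_gives_horizontal_curve {N K : ℕ} (hN : 0 < N) (hK : 0 < K)
    (V V' : ℝ → Matrix (Fin N) (Fin N) ℂ)
    (hV : ∀ t i j, HasDerivAt (fun s => V s i j) (V' t i j) t)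
    (hVunit : ∀ t, (V t)ᴴ * V t = 1)
    (L0 : Matrix (Fin N) (Fin K) ℂ) (hL0 : L0ᴴ * L0 = 1)
    (h : ℝ → Matrix (Fin K) (Fin K) ℂ)
    (hh : ∀ t i j, HasDerivAt (fun s => h s i j)
      ((-(L0ᴴ * (V t)ᴴ * V' t * L0) * h t) i j) t) :
    ∀ t : ℝ, ∃ L't : Matrix (Fin N) (Fin K) ℂ,
      (∀ i j, HasDerivAt (fun s => (V s * L0 * h s) i j) (L't i j) t) ∧
      (V t * L0 * h t)ᴴ * L't = 0 :=
  lift_equation_gives_horizontal_curve_general V V' hV hVunit L0 hL0 h hh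
end

section
/- Let H and X be Hermitian N×N complex matrices with H·X = −X·H, let ω, ω_H be real numbers, and define V(t) = exp(i·ω_H·t·H)·exp(i·ω·t·X) (matrix exponentials). Then V is differentiable and V(t)†·V'(t) = i·ω_H·H·exp(2i·ω·t·X) + i·ω·X for all t. -/
open Matrix

/-!
Write `V t = exp (t • a) * exp (t • b)` with `a = i ω_H H` and `b = i ω X`, both skew-Hermitian.
The product rule gives `V' t = V t * (exp (-(t • b)) * a * exp (t • b) + b)`, and `V t` is unitary,
so `(V t)ᴴ * V' t = exp (-(t • b)) * a * exp (t • b) + b`. Since `a` anticommutes with `b`,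
`a * exp (t • b) = exp (-(t • b)) * a`, which turns the conjugate into `a * exp (2 • t • b)`.
-/

open NormedSpace

namespace NormedSpace

variable {𝔸 : Type*} [NormedRing 𝔸] [NormedAlgebra ℝ 𝔸] [CompleteSpace 𝔸]

theorem exp_mul_exp_neg (x : 𝔸) : exp x * exp (-x) = 1 := by
  let +nondep : NormedAlgebra ℚ 𝔸 := .restrictScalars ℚ ℝ 𝔸
  rw [← exp_add_of_commute (Commute.refl x).neg_right, add_neg_cancel, exp_zero]

theorem exp_neg_mul_mul_exp_of_anticommute {a x : 𝔸} (h : a * x = -(x * a)) :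
    exp (-x) * a * exp x = a * exp (2 • x) := by
  let +nondep : NormedAlgebra ℚ 𝔸 := .restrictScalars ℚ ℝ 𝔸
  have hsemi : SemiconjBy a x (-x) := by rw [SemiconjBy, h, neg_mul]
  rw [← hsemi.exp_right.eq, mul_assoc, two_smul, exp_add_of_commute (Commute.refl x)]

theorem hasDerivAt_exp_smul_mul_exp_smul (a b : 𝔸) (t : ℝ) :
    HasDerivAt (fun s : ℝ => exp (s • a) * exp (s • b))
      (exp (t • a) * exp (t • b) * (exp (-(t • b)) * a * exp (t • b) + b)) t := by
  convert (hasDerivAt_exp_smul_const a t).mul (hasDerivAt_exp_smul_const b t) using 1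
  · rfl
  simp only [mul_add, mul_assoc]
  rw [← mul_assoc (exp (t • b)), exp_mul_exp_neg, one_mul]

theorem star_exp_mul_exp_mul_self [StarRing 𝔸] [ContinuousStar 𝔸] {a b : 𝔸}
    (ha : a ∈ skewAdjoint 𝔸) (hb : b ∈ skewAdjoint 𝔸) :
    star (exp a * exp b) * (exp a * exp b) = 1 :=
  let +nondep : NormedAlgebra ℚ 𝔸 := .restrictScalars ℚ ℝ 𝔸
  Unitary.star_mul_self_of_mem <| mul_mem (exp_mem_unitary_of_mem_skewAdjoint ha)
    (exp_mem_unitary_of_mem_skewAdjoint hb)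

end NormedSpace

open scoped Norms.Elementwise in
theorem Matrix.hasDerivAt_apply {𝕜 α m n : Type*} [NontriviallyNormedField 𝕜]
    [NormedAddCommGroup α] [NormedSpace 𝕜 α] [Fintype m] [Fintype n] {f : 𝕜 → Matrix m n α}
    {f' : Matrix m n α} {t : 𝕜} (h : HasDerivAt f f' t) (i : m) (j : n) :
    HasDerivAt (fun s => f s i j) (f' i j) t :=
  hasDerivAt_pi.1 (hasDerivAt_pi.1 h i) j

theorem Complex.I_mul_ofReal_mem_skewAdjoint (c : ℝ) : I * c ∈ skewAdjoint ℂ := by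
  simp [skewAdjoint.mem_iff]

theorem Complex.mul_ofReal_smul {A : Type*} [AddCommGroup A] [Module ℂ A] (z : ℂ) (t : ℝ)
    (a : A) : (z * t) • a = t • z • a := by
  rw [mul_comm, mul_smul, coe_smul]

theorem path_derivative_general {N : ℕ}
    (H X : Matrix (Fin N) (Fin N) ℂ)
    (hHh : Hᴴ = H) (hXh : Xᴴ = X) (hHX : H * X = -(X * H))
    (ω ωH : ℝ)
    (V : ℝ → Matrix (Fin N) (Fin N) ℂ)
    (hV : ∀ t : ℝ, V t = NormedSpace.exp ((Complex.I * (ωH * t)) • H) *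
      NormedSpace.exp ((Complex.I * (ω * t)) • X)) :
    ∃ V' : ℝ → Matrix (Fin N) (Fin N) ℂ,
      (∀ t i j, HasDerivAt (fun s => V s i j) (V' t i j) t) ∧
      ∀ t : ℝ, (V t)ᴴ * V' t
        = (Complex.I * ωH) • (H * NormedSpace.exp ((2 * Complex.I * (ω * t)) • X))
          + (Complex.I * ω) • X := by
  -- The L² operator norm induces the entrywise topology and makes `star` continuous.
  open scoped Norms.L2Operator in
  set a := (Complex.I * ωH) • H
  set b := (Complex.I * ω) • X
  have hVab : V = fun s : ℝ => exp (s • a) * exp (s • b) := by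
    funext s
    rw [hV, ← mul_assoc, ← mul_assoc, Complex.mul_ofReal_smul _ s,
      Complex.mul_ofReal_smul _ s]
  have ha : a ∈ skewAdjoint _ :=
    IsSelfAdjoint.smul_mem_skewAdjoint (Complex.I_mul_ofReal_mem_skewAdjoint ωH) hHh
  have hb : b ∈ skewAdjoint _ :=
    IsSelfAdjoint.smul_mem_skewAdjoint (Complex.I_mul_ofReal_mem_skewAdjoint ω) hXh
  have hab : a * b = -(b * a) := by
    rw [smul_mul_smul_comm, smul_mul_smul_comm, hHX, smul_neg, mul_comm]
  refine ⟨fun t => V t * (exp (-(t • b)) * a * exp (t • b) + b), fun t i j => ?_, fun t => ?_⟩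
  · rw [hVab]
    exact Matrix.hasDerivAt_apply (hasDerivAt_exp_smul_mul_exp_smul a b t) i j
  · have htab : a * (t • b) = -((t • b) * a) := by
      rw [mul_smul_comm t a b, smul_mul_assoc t b a, hab, smul_neg]
    have hexp : (2 * Complex.I * (ω * t)) • X = 2 • (t • b) := by
      rw [← Complex.mul_ofReal_smul, two_smul, ← add_smul]
      ring_nf
    rw [← star_eq_conjTranspose, ← mul_assoc, hVab,
      star_exp_mul_exp_mul_self (skewAdjoint.smul_mem t ha) (skewAdjoint.smul_mem t hb), one_mul,
      exp_neg_mul_mul_exp_of_anticommute htab, hexp, smul_mul_assoc]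

/-- For `V(t) = exp(i ω_H t H) · exp(i ω t X)` with `H, X` Hermitian and anticommuting,
`V` is differentiable and `V(t)ᴴ · V'(t) = i ω_H H exp(2 i ω t X) + i ω X`. -/
theorem path_derivative {N : ℕ} (hN : 0 < N)
    (H X : Matrix (Fin N) (Fin N) ℂ)
    (hHh : Hᴴ = H) (hXh : Xᴴ = X) (hHX : H * X = -(X * H))
    (ω ωH : ℝ)
    (V : ℝ → Matrix (Fin N) (Fin N) ℂ)
    (hV : ∀ t : ℝ, V t = NormedSpace.exp ((Complex.I * (ωH * t)) • H) *
      NormedSpace.exp ((Complex.I * (ω * t)) • X)) :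
    ∃ V' : ℝ → Matrix (Fin N) (Fin N) ℂ,
      (∀ t i j, HasDerivAt (fun s => V s i j) (V' t i j) t) ∧
      ∀ t : ℝ, (V t)ᴴ * V' t
        = (Complex.I * ωH) • (H * NormedSpace.exp ((2 * Complex.I * (ω * t)) • X))
          + (Complex.I * ω) • X :=
  path_derivative_general H X hHh hXh hHX ω ωH V hV
end

section
/- (Instantaneous code state / explicit horizontal lift.) The curve L(t) = V(t)·exp(−i·θ̄(t)·H)·L0 satisfies L(t)†·L'(t) = 0 for all t (i.e., it is the horizontal lift of the rotated code-space curve), and its associated projector is L(t)·L(t)† = V(t)·P0·V(t)†. -/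
/-!
Write `L(t) = U(t) L0` with the Euler-type frame `U = exp (iφH) exp (iψX) exp (iχH)`, where
`φ(t) = ω_H t`, `ψ(t) = ω t` and `χ = -θ̄`. Since `H` and `X` anticommute, conjugating `H` by
`exp (zX)` gives `H exp (2zX) = H (cosh 2z + sinh 2z X)`, and conjugating `X` by `exp (zH)` gives
`X exp (2zH)`. Hence `U†U'` is a combination of `H`, `H X W` and `X W` with `W = exp (2iχH)`
commuting with `P0`. Because `P0 X P0 = 0`, compressing by `P0` leaves only
`i (φ' cos 2ψ + χ') H P0`, and this vanishes because `θ̄' = ω_H cos 2ωt`. Since `L0 = P0 L0`, this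
gives `L†L' = 0`. The projector identity holds because `exp (-iθ̄H)` is unitary and commutes
with `P0`.
-/

open NormedSpace

theorem compress_smul_add_smul_mul_add_smul_mul {R : Type*} [Ring R] [Algebra ℂ R]
    {P H X W : R} (hP : P * P = P) (hPH : Commute P H) (hPXP : P * X * P = 0)
    (hPW : Commute P W) (α β γ : ℂ) :
    P * (α • H + β • (H * (X * W)) + γ • (X * W)) * P = α • (H * P) := by
  have hXW : P * (X * W) * P = 0 := by
    rw [mul_assoc, mul_assoc, ← hPW.eq, ← mul_assoc X, ← mul_assoc, ← mul_assoc, hPXP, zero_mul]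
  have hHXW : P * (H * (X * W)) * P = 0 := by
    rw [← mul_assoc P H, hPH.eq, mul_assoc H, mul_assoc H, hXW, mul_zero]
  simp only [mul_add, add_mul, mul_smul_comm, smul_mul_assoc, hXW, hHXW, smul_zero, add_zero]
  rw [hPH.eq, mul_assoc, hP]

section BanachAlgebra

variable {A : Type*} [NormedRing A] [NormedAlgebra ℂ A]

theorem exp_smul_of_mul_self_eq_one {M : A} (hM : M * M = 1) (z : ℂ) :
    exp (z • M) = Complex.cosh z • (1 : A) + Complex.sinh z • M := by
  have hpow_even (k : ℕ) : M ^ (2 * k) = 1 := by rw [pow_mul, sq, hM, one_pow]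
  have hcosh : HasSum (fun k : ℕ => (z ^ (2 * k) / ((2 * k).factorial : ℂ)) • M ^ (2 * k))
      (Complex.cosh z • (1 : A)) := by
    refine ((Complex.hasSum_cosh z).smul_const (1 : A)).congr_fun fun k => ?_
    rw [hpow_even]
  have hsinh : HasSum (fun k : ℕ => (z ^ (2 * k + 1) / ((2 * k + 1).factorial : ℂ)) •
      M ^ (2 * k + 1)) (Complex.sinh z • M) := by
    refine ((Complex.hasSum_sinh z).smul_const M).congr_fun fun k => ?_
    rw [pow_succ M, hpow_even, one_mul]
  have hsum := HasSum.even_add_odd (f := fun p => (z ^ p / (p.factorial : ℂ)) • M ^ p) hcosh hsinh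
  rw [exp_eq_tsum ℂ, ← hsum.tsum_eq]
  refine tsum_congr fun p => ?_
  rw [smul_pow, smul_smul, mul_comm, ← div_eq_mul_inv]

theorem star_exp_smul [StarRing A] [ContinuousStar A] [StarModule ℂ A] {Y : A}
    (hY : IsSelfAdjoint Y) {z : ℂ} (hz : star z = -z) :
    star (exp (z • Y)) = exp ((-z) • Y) := by
  rw [star_exp, star_smul, hY.star_eq, hz]

theorem HasDerivAt.exp_I_mul_smul [CompleteSpace A] {f : ℝ → ℝ} {f' t : ℝ}
    (hf : HasDerivAt f f' t) (Y : A) :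
    HasDerivAt (fun s => NormedSpace.exp ((Complex.I * f s) • Y))
      (NormedSpace.exp ((Complex.I * f t) • Y) * ((Complex.I * f') • Y)) t := by
  have hsmul (u : ℝ) (Z : A) : u • Complex.I • Z = (Complex.I * u) • Z := by
    rw [← Complex.coe_smul, smul_smul, mul_comm]
  have h := (hasDerivAt_exp_smul_const (𝕂 := ℝ) (Complex.I • Y) (f t)).scomp t hf
  simp only [Function.comp_def, hsmul] at h
  refine h.congr_deriv ?_
  rw [mul_smul_comm, mul_smul_comm, hsmul]

variable [NormedAlgebra ℚ A] [CompleteSpace A]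

theorem exp_smul_mul_exp_smul (Y : A) (z w : ℂ) :
    exp (z • Y) * exp (w • Y) = exp ((z + w) • Y) := by
  rw [add_smul, exp_add_of_commute (((Commute.refl Y).smul_left z).smul_right w)]

theorem exp_neg_smul_mul_exp_smul (Y : A) (z : ℂ) : exp ((-z) • Y) * exp (z • Y) = 1 := by
  rw [exp_smul_mul_exp_smul, neg_add_cancel, zero_smul, exp_zero]

theorem exp_neg_smul_mul_exp_smul_mul (Y : A) (z : ℂ) (Q : A) :
    exp ((-z) • Y) * (exp (z • Y) * Q) = Q := by
  rw [← mul_assoc, exp_neg_smul_mul_exp_smul, one_mul]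

theorem exp_smul_mul_exp_neg_smul_mul (Y : A) (z : ℂ) (Q : A) :
    exp (z • Y) * (exp ((-z) • Y) * Q) = Q := by
  simpa only [neg_neg] using exp_neg_smul_mul_exp_smul_mul Y (-z) Q

theorem exp_neg_smul_mul_mul_exp_smul_of_commute {M Y : A} (h : Commute M Y) (z : ℂ) :
    exp ((-z) • Y) * M * exp (z • Y) = M := by
  rw [neg_smul]
  exact (h.smul_right z).exp_neg_mul_mul_exp_eq_self

theorem exp_neg_smul_mul_mul_exp_smul_of_anticommute {M Y : A} (h : M * Y = -(Y * M))
    (z : ℂ) : exp ((-z) • Y) * M * exp (z • Y) = M * exp ((2 * z) • Y) := by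
  have hsemi : SemiconjBy M (z • Y) ((-z) • Y) := by
    rw [SemiconjBy, mul_smul_comm, smul_mul_assoc, h, neg_smul, smul_neg]
  rw [← hsemi.exp_right, mul_assoc, exp_smul_mul_exp_smul, two_mul]

/-- The second factor is the product-rule derivative of `exp (z₁H) exp (z₂X) exp (z₃H)` when the
exponents `zᵢ` move with velocities `wᵢ`. -/
theorem star_exp_mul_exp_mul_exp_mul_eq [StarRing A] [ContinuousStar A] [StarModule ℂ A]
    {H X : A} (hH : IsSelfAdjoint H) (hX : IsSelfAdjoint X) (hX2 : X * X = 1)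
    (hHX : H * X = -(X * H)) {z₁ z₂ z₃ : ℂ} (hz₁ : star z₁ = -z₁) (hz₂ : star z₂ = -z₂)
    (hz₃ : star z₃ = -z₃) (w₁ w₂ w₃ : ℂ) :
    star (exp (z₁ • H) * exp (z₂ • X) * exp (z₃ • H)) *
      ((exp (z₁ • H) * (w₁ • H) * exp (z₂ • X) + exp (z₁ • H) * (exp (z₂ • X) * (w₂ • X))) *
        exp (z₃ • H) + exp (z₁ • H) * exp (z₂ • X) * (exp (z₃ • H) * (w₃ • H))) =
      (w₁ * Complex.cosh (2 * z₂) + w₃) • H +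
      (w₁ * Complex.sinh (2 * z₂)) • (H * (X * exp ((2 * z₃) • H))) +
      w₂ • (X * exp ((2 * z₃) • H)) := by
  have hXH : X * H = -(H * X) := by rw [hHX, neg_neg]
  have hconj₃ : exp ((-z₃) • H) * (H * X) * exp (z₃ • H) = H * (X * exp ((2 * z₃) • H)) := by
    rw [← exp_neg_smul_mul_mul_exp_smul_of_anticommute hXH, ← mul_assoc H, ← mul_assoc,
      ← mul_assoc, (((Commute.refl H).smul_right _).exp_right).eq]
  calc _ = w₁ • (exp ((-z₃) • H) * (exp ((-z₂) • X) * H * exp (z₂ • X)) * exp (z₃ • H)) +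
        w₂ • (exp ((-z₃) • H) * X * exp (z₃ • H)) + w₃ • H := by
        simp only [star_mul, star_exp_smul hH hz₁, star_exp_smul hX hz₂, star_exp_smul hH hz₃,
          mul_add, add_mul, mul_assoc, smul_mul_assoc, mul_smul_comm, exp_neg_smul_mul_exp_smul_mul]
    _ = w₁ • (exp ((-z₃) • H) * (H * exp ((2 * z₂) • X)) * exp (z₃ • H)) +
        w₂ • (X * exp ((2 * z₃) • H)) + w₃ • H := by
        rw [exp_neg_smul_mul_mul_exp_smul_of_anticommute hHX,
          exp_neg_smul_mul_mul_exp_smul_of_anticommute hXH]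
    _ = _ := by
        rw [exp_smul_of_mul_self_eq_one hX2]
        simp only [mul_add, add_mul, mul_smul_comm, smul_mul_assoc, mul_one, hconj₃,
          exp_neg_smul_mul_mul_exp_smul_of_commute (Commute.refl H)]
        rw [smul_add, smul_smul, smul_smul, add_smul]
        abel

end BanachAlgebra

section EulerFrame

open Complex in
noncomputable def eulerFrame {A : Type*} [NormedRing A] [NormedAlgebra ℂ A] (H X : A)
    (φ ψ χ : ℝ → ℝ) (s : ℝ) : A :=
  exp ((I * φ s) • H) * exp ((I * ψ s) • X) * exp ((I * χ s) • H)

variable {A : Type*} [NormedRing A] [NormedAlgebra ℂ A] [NormedAlgebra ℚ A] [CompleteSpace A]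
  [StarRing A] [ContinuousStar A] [StarModule ℂ A]
  {H X : A} {φ ψ χ : ℝ → ℝ} {φ' ψ' χ' t : ℝ}

open Complex in
theorem exists_hasDerivAt_eulerFrame_star_mul_eq (hH : IsSelfAdjoint H) (hX : IsSelfAdjoint X)
    (hX2 : X * X = 1) (hHX : H * X = -(X * H))
    (hφ : HasDerivAt φ φ' t) (hψ : HasDerivAt ψ ψ' t) (hχ : HasDerivAt χ χ' t) :
    ∃ U', HasDerivAt (eulerFrame H X φ ψ χ) U' t ∧ star (eulerFrame H X φ ψ χ t) * U' =
      (I * φ' * cosh (2 * (I * ψ t)) + I * χ') • H +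
      (I * φ' * sinh (2 * (I * ψ t))) • (H * (X * exp ((2 * (I * χ t)) • H))) +
      (I * ψ') • (X * exp ((2 * (I * χ t)) • H)) := by
  have hI (r : ℝ) : star (I * r) = -(I * r) := by simp
  exact ⟨_, ((hφ.exp_I_mul_smul H).mul (hψ.exp_I_mul_smul X)).mul (hχ.exp_I_mul_smul H),
    star_exp_mul_exp_mul_exp_mul_eq hH hX hX2 hHX (hI _) (hI _) (hI _) _ _ _⟩

theorem exists_hasDerivAt_eulerFrame_compress_eq_zero {P : A} (hH : IsSelfAdjoint H)
    (hX : IsSelfAdjoint X) (hX2 : X * X = 1) (hHX : H * X = -(X * H))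
    (hP : P * P = P) (hPH : Commute P H) (hPXP : P * X * P = 0)
    (hφ : HasDerivAt φ φ' t) (hψ : HasDerivAt ψ ψ' t)
    (hχ : HasDerivAt χ (-(φ' * Real.cos (2 * ψ t))) t) :
    ∃ U', HasDerivAt (eulerFrame H X φ ψ χ) U' t ∧
      P * (star (eulerFrame H X φ ψ χ t) * U') * P = 0 := by
  obtain ⟨U', hU', hG⟩ := exists_hasDerivAt_eulerFrame_star_mul_eq hH hX hX2 hHX hφ hψ hχ
  have hcoef : Complex.I * φ' * Complex.cosh (2 * (Complex.I * ψ t)) +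
      Complex.I * ((-(φ' * Real.cos (2 * ψ t)) : ℝ) : ℂ) = 0 := by
    rw [show 2 * (Complex.I * ψ t) = ((2 * ψ t : ℝ) : ℂ) * Complex.I by push_cast; ring,
      Complex.cosh_mul_I]
    push_cast
    ring
  refine ⟨U', hU', ?_⟩
  rw [hG, compress_smul_add_smul_mul_add_smul_mul hP hPH hPXP (hPH.smul_right _).exp_right,
    hcoef, zero_smul]

theorem eulerFrame_mul_mul_star {P : A} (hH : IsSelfAdjoint H) (hPH : Commute P H) :
    eulerFrame H X φ ψ χ t * P * star (eulerFrame H X φ ψ χ t) =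
      exp ((Complex.I * φ t) • H) * exp ((Complex.I * ψ t) • X) * P *
        star (exp ((Complex.I * φ t) • H) * exp ((Complex.I * ψ t) • X)) := by
  have hI : star (Complex.I * χ t) = -(Complex.I * χ t) := by simp
  have hPE : exp ((Complex.I * χ t) • H) * P = P * exp ((Complex.I * χ t) • H) :=
    ((hPH.smul_right _).exp_right).eq.symm
  rw [eulerFrame, star_mul _ (exp _), star_exp_smul hH hI, mul_assoc _ _ P, hPE]
  simp only [mul_assoc, exp_smul_mul_exp_neg_smul_mul]

end EulerFrame

open Matrix

theorem Matrix.conjTranspose_mul_mul_eq_zero_of_mul_mul_eq_zero {m n : Type*} [Fintype m]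
    [Fintype n] [DecidableEq n] {L₀ : Matrix m n ℂ} {P Y : Matrix m m ℂ} (hL₀ : L₀ᴴ * L₀ = 1)
    (hL₀P : L₀ * L₀ᴴ = P) (hPYP : P * Y * P = 0) : L₀ᴴ * Y * L₀ = 0 := by
  calc L₀ᴴ * Y * L₀ = L₀ᴴ * L₀ * L₀ᴴ * Y * (L₀ * L₀ᴴ * L₀) := by
        rw [hL₀, Matrix.one_mul, Matrix.mul_assoc L₀, hL₀, Matrix.mul_one]
    _ = L₀ᴴ * (P * Y * P) * L₀ := by simp only [← hL₀P, Matrix.mul_assoc]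
    _ = 0 := by rw [hPYP, Matrix.mul_zero, Matrix.zero_mul]

theorem instantaneous_code_state_general {N K : ℕ}
    (H X : Matrix (Fin N) (Fin N) ℂ)
    (hHh : Hᴴ = H) (hXh : Xᴴ = X)
    (hX2 : X * X = 1) (hHX : H * X = -(X * H))
    (ω θ ωH : ℝ) (hωH : ωH = θ * ω / (2 * Real.pi))
    (θbar : ℝ → ℝ) (hθbar : ∀ t, θbar t = θ / (4 * Real.pi) * Real.sin (2 * ω * t))
    (V : ℝ → Matrix (Fin N) (Fin N) ℂ)
    (hV : ∀ t : ℝ, V t = NormedSpace.exp ((Complex.I * (ωH * t)) • H) *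
      NormedSpace.exp ((Complex.I * (ω * t)) • X))
    (P0 : Matrix (Fin N) (Fin N) ℂ)
    (hP0proj : P0 * P0 = P0)
    (hP0H : P0 * H = H * P0) (hPXP : P0 * X * P0 = 0)
    (L0 : Matrix (Fin N) (Fin K) ℂ) (hL0 : L0ᴴ * L0 = 1) (hL0P : L0 * L0ᴴ = P0)
    (L : ℝ → Matrix (Fin N) (Fin K) ℂ)
    (hL : ∀ t : ℝ, L t = V t *
      NormedSpace.exp ((-(Complex.I * (θbar t : ℝ))) • H) * L0) :
    (∀ t : ℝ, ∃ L't : Matrix (Fin N) (Fin K) ℂ,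
      (∀ i j, HasDerivAt (fun s => L s i j) (L't i j) t) ∧ (L t)ᴴ * L't = 0) ∧
    (∀ t : ℝ, L t * (L t)ᴴ = V t * P0 * (V t)ᴴ) := by
  -- Matrices carry no global norm, so one is chosen here; its topology agrees with the product
  -- topology used in the statement only up to defeq, which the `rfl`s below bridge.
  let _ : NormedRing (Matrix (Fin N) (Fin N) ℂ) := Matrix.linftyOpNormedRing
  let _ : NormedAlgebra ℂ (Matrix (Fin N) (Fin N) ℂ) := Matrix.linftyOpNormedAlgebra
  let _ : NormedAlgebra ℚ (Matrix (Fin N) (Fin N) ℂ) := Matrix.linftyOpNormedAlgebra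
  let _ : @ContinuousStar (Matrix (Fin N) (Fin N) ℂ)
    PseudoMetricSpace.toUniformSpace.toTopologicalSpace _ := ⟨continuous_id.matrix_conjTranspose⟩
  set U := eulerFrame H X (ωH * ·) (ω * ·) (-θbar ·) with hU
  have hVU (s : ℝ) :
      V s = exp ((Complex.I * (ωH * s : ℝ)) • H) * exp ((Complex.I * (ω * s : ℝ)) • X) := by
    rw [hV]; push_cast; rfl
  have hLU (s : ℝ) : L s = U s * L0 := by
    simp only [hL, hVU, hU, eulerFrame, Complex.ofReal_neg, mul_neg]
    rfl
  refine ⟨fun t => ?_, fun t => ?_⟩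
  · have hθ : HasDerivAt (-θbar ·) (-(ωH * Real.cos (2 * (ω * t)))) t := by
      simp only [hθbar]
      refine (((hasDerivAt_id' t).const_mul (2 * ω)).sin.const_mul _).neg.congr_deriv ?_
      rw [hωH, ← mul_assoc]
      field_simp
      ring
    obtain ⟨U', hU', hPUP⟩ := exists_hasDerivAt_eulerFrame_compress_eq_zero (P := P0) hHh hXh
      hX2 hHX hP0proj hP0H hPXP (by simpa using (hasDerivAt_id t).const_mul ωH)
      (by simpa using (hasDerivAt_id t).const_mul ω) hθ
    refine ⟨U' * L0, fun i j => ?_, ?_⟩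
    · simp only [hLU]
      exact (entryLinearMap ℝ ℂ i j ∘ₗ mulRightLinearMap (Fin N) ℝ L0
        ).toContinuousLinearMap.hasFDerivAt.comp_hasDerivAt t hU'
    · rw [hLU, conjTranspose_mul, ← star_eq_conjTranspose, Matrix.mul_assoc,
        ← Matrix.mul_assoc _ U', ← Matrix.mul_assoc L0ᴴ]
      exact conjTranspose_mul_mul_eq_zero_of_mul_mul_eq_zero hL0 hL0P hPUP
  · rw [hLU, conjTranspose_mul, ← Matrix.mul_assoc, Matrix.mul_assoc _ L0, hL0P,
      ← star_eq_conjTranspose, eulerFrame_mul_mul_star hHh hP0H, hVU, star_eq_conjTranspose]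
    rfl

/-- Instantaneous code state / explicit horizontal lift: the curve
`L(t) = V(t)·exp(−i θ̄(t) H)·L0` is horizontal (`L(t)ᴴ·L'(t) = 0`) and its associated
projector is `L(t)·L(t)ᴴ = V(t)·P0·V(t)ᴴ`. -/
theorem instantaneous_code_state {N K : ℕ} (hN : 0 < N) (hK : 0 < K)
    (H X : Matrix (Fin N) (Fin N) ℂ)
    (hHh : Hᴴ = H) (hXh : Xᴴ = X)
    (hH2 : H * H = 1) (hX2 : X * X = 1) (hHX : H * X = -(X * H))
    (ω θ ωH : ℝ) (hω : 0 < ω) (hωH : ωH = θ * ω / (2 * Real.pi))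
    (θbar : ℝ → ℝ) (hθbar : ∀ t, θbar t = θ / (4 * Real.pi) * Real.sin (2 * ω * t))
    (V : ℝ → Matrix (Fin N) (Fin N) ℂ)
    (hV : ∀ t : ℝ, V t = NormedSpace.exp ((Complex.I * (ωH * t)) • H) *
      NormedSpace.exp ((Complex.I * (ω * t)) • X))
    (P0 : Matrix (Fin N) (Fin N) ℂ)
    (hP0proj : P0 * P0 = P0) (hP0herm : P0ᴴ = P0)
    (hP0H : P0 * H = H * P0) (hPXP : P0 * X * P0 = 0) (hPHXP : P0 * H * X * P0 = 0)
    (L0 : Matrix (Fin N) (Fin K) ℂ) (hL0 : L0ᴴ * L0 = 1) (hL0P : L0 * L0ᴴ = P0)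
    (L : ℝ → Matrix (Fin N) (Fin K) ℂ)
    (hL : ∀ t : ℝ, L t = V t *
      NormedSpace.exp ((-(Complex.I * (θbar t : ℝ))) • H) * L0) :
    (∀ t : ℝ, ∃ L't : Matrix (Fin N) (Fin K) ℂ,
      (∀ i j, HasDerivAt (fun s => L s i j) (L't i j) t) ∧ (L t)ᴴ * L't = 0) ∧
    (∀ t : ℝ, L t * (L t)ᴴ = V t * P0 * (V t)ᴴ) :=
  instantaneous_code_state_general H X hHh hXh hX2 hHX ω θ ωH hωH θbar hθbar V hV P0 hP0proj hP0H
    hPXP L0 hL0 hL0P L hL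
end

section
/- (Holonomy of the measurement-based gate.) Assume additionally that exp(2πi·X) = I. Then the horizontal lift L(t) = V(t)·exp(−i·θ̄(t)·H)·L0 of the loop of rotated code spaces satisfies L(T) = exp(iθH)·L0 at the final time T = 2π/ω; in particular, for every unit vector ψ̄ with P0·ψ̄ = ψ̄, the final state is exp(iθH)·ψ̄, so the holonomy acquired around the loop is the logical rotation exp(iθH). -/
open Matrix

/-! At `T = 2π/ω` the correction phase `θ̄(T) = (θ/4π)·sin 4π` vanishes, the `X`-rotation
`exp(iωT X) = exp(2πi X)` is trivial, and the `H`-rotation has reached `exp(iω_H T H) = exp(iθH)`.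
A code-space vector `ψ̄` is recovered from its logical coordinates `L0ᴴ ψ̄` because
`L0 L0ᴴ = P0`. -/

theorem Real.sin_two_mul_mul_two_pi_div {ω : ℝ} (hω : ω ≠ 0) :
    Real.sin (2 * ω * (2 * Real.pi / ω)) = 0 := by
  have h : 2 * ω * (2 * Real.pi / ω) = ((4 : ℤ) : ℝ) * Real.pi := by
    push_cast
    field_simp
    ring
  rw [h, Real.sin_int_mul_pi]

theorem Matrix.mul_mulVec_mulVec_of_mulVec_eq_self {m n l R : Type*} [Fintype m] [Fintype n]
    [Semiring R] (M : Matrix l m R) (A : Matrix m n R) (B : Matrix n m R)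
    {ψ : m → R} (hψ : (A * B) *ᵥ ψ = ψ) : (M * A) *ᵥ (B *ᵥ ψ) = M *ᵥ ψ := by
  rw [mulVec_mulVec, Matrix.mul_assoc, ← mulVec_mulVec, hψ]

theorem measurement_based_holonomy_general {N K : ℕ}
    (H X : Matrix (Fin N) (Fin N) ℂ)
    (ω θ ωH T : ℝ) (hω : 0 < ω) (hωH : ωH = θ * ω / (2 * Real.pi))
    (hT : T = 2 * Real.pi / ω)
    (θbar : ℝ → ℝ) (hθbar : ∀ t, θbar t = θ / (4 * Real.pi) * Real.sin (2 * ω * t))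
    (V : ℝ → Matrix (Fin N) (Fin N) ℂ)
    (hV : ∀ t : ℝ, V t = NormedSpace.exp ((Complex.I * (ωH * t)) • H) *
      NormedSpace.exp ((Complex.I * (ω * t)) • X))
    (P0 : Matrix (Fin N) (Fin N) ℂ)
    (L0 : Matrix (Fin N) (Fin K) ℂ) (hL0P : L0 * L0ᴴ = P0)
    (hloop : NormedSpace.exp ((((2 * Real.pi : ℝ) : ℂ) * Complex.I) • X) = 1)
    (L : ℝ → Matrix (Fin N) (Fin K) ℂ)
    (hL : ∀ t : ℝ, L t = V t *
      NormedSpace.exp ((-(Complex.I * (θbar t : ℝ))) • H) * L0) :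
    L T = NormedSpace.exp ((Complex.I * (θ : ℝ)) • H) * L0 ∧
    ∀ ψ : Fin N → ℂ, star ψ ⬝ᵥ ψ = 1 → P0 *ᵥ ψ = ψ →
      L T *ᵥ (L0ᴴ *ᵥ ψ) = NormedSpace.exp ((Complex.I * (θ : ℝ)) • H) *ᵥ ψ := by
  have hωT : ω * T = 2 * Real.pi := by rw [hT]; field_simp
  have hωHT : ωH * T = θ := by rw [hωH, div_mul_eq_mul_div, mul_assoc, hωT]; field_simp
  have hθbarT : θbar T = 0 := by
    rw [hθbar, hT, Real.sin_two_mul_mul_two_pi_div hω.ne', mul_zero]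
  have hLT : L T = NormedSpace.exp ((Complex.I * (θ : ℝ)) • H) * L0 := by
    rw [hL, hV, hθbarT, ← Complex.ofReal_mul, ← Complex.ofReal_mul, hωHT, hωT,
      mul_comm Complex.I ((2 * Real.pi : ℝ) : ℂ), hloop]
    simp
  refine ⟨hLT, fun ψ _ hψ => ?_⟩
  rw [hLT]
  exact mul_mulVec_mulVec_of_mulVec_eq_self _ _ _ (hL0P ▸ hψ)

/-- Holonomy of the measurement-based gate: if additionally `exp(2πi X) = 1`, the
horizontal lift `L(t) = V(t)·exp(−i θ̄(t) H)·L0` of the loop of rotated code spaces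
satisfies `L(T) = exp(iθH)·L0` at `T = 2π/ω`, and every unit vector `ψ̄` in the code
space (`P0·ψ̄ = ψ̄`) is mapped to the final state `exp(iθH)·ψ̄`: the holonomy is the
logical rotation `exp(iθH)`. -/
theorem measurement_based_holonomy {N K : ℕ} (hN : 0 < N) (hK : 0 < K)
    (H X : Matrix (Fin N) (Fin N) ℂ)
    (hHh : Hᴴ = H) (hXh : Xᴴ = X)
    (hH2 : H * H = 1) (hX2 : X * X = 1) (hHX : H * X = -(X * H))
    (ω θ ωH T : ℝ) (hω : 0 < ω) (hωH : ωH = θ * ω / (2 * Real.pi))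
    (hT : T = 2 * Real.pi / ω)
    (θbar : ℝ → ℝ) (hθbar : ∀ t, θbar t = θ / (4 * Real.pi) * Real.sin (2 * ω * t))
    (V : ℝ → Matrix (Fin N) (Fin N) ℂ)
    (hV : ∀ t : ℝ, V t = NormedSpace.exp ((Complex.I * (ωH * t)) • H) *
      NormedSpace.exp ((Complex.I * (ω * t)) • X))
    (P0 : Matrix (Fin N) (Fin N) ℂ)
    (hP0proj : P0 * P0 = P0) (hP0herm : P0ᴴ = P0)
    (hP0H : P0 * H = H * P0) (hPXP : P0 * X * P0 = 0) (hPHXP : P0 * H * X * P0 = 0)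
    (L0 : Matrix (Fin N) (Fin K) ℂ) (hL0 : L0ᴴ * L0 = 1) (hL0P : L0 * L0ᴴ = P0)
    (hloop : NormedSpace.exp ((((2 * Real.pi : ℝ) : ℂ) * Complex.I) • X) = 1)
    (L : ℝ → Matrix (Fin N) (Fin K) ℂ)
    (hL : ∀ t : ℝ, L t = V t *
      NormedSpace.exp ((-(Complex.I * (θbar t : ℝ))) • H) * L0) :
    L T = NormedSpace.exp ((Complex.I * (θ : ℝ)) • H) * L0 ∧
    ∀ ψ : Fin N → ℂ, star ψ ⬝ᵥ ψ = 1 → P0 *ᵥ ψ = ψ →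
      L T *ᵥ (L0ᴴ *ᵥ ψ) = NormedSpace.exp ((Complex.I * (θ : ℝ)) • H) *ᵥ ψ :=
  measurement_based_holonomy_general H X ω θ ωH T hω hωH hT θbar hθbar V hV P0 L0 hL0P hloop L hL
end

section
/- (Rotated error, class-2 case.) Let E be an N×N complex matrix with E·H = −H·E and E·X = X·E. Then for all t the rotated error E(t) = U(t)†·E·U(t) decomposes as E(t) = cos(2ω_H t)·exp(2i·θ̄(t)·H)·E + sin(2ω_H t)·sin(2ωt)·E·X·H + i·sin(2ω_H t)·cos(2ωt)·exp(2i·θ̄(t)·H)·E·H. -/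
/-!
Since `H² = 1`, `exp (z • H) = cosh z • 1 + sinh z • H`, so an element anticommuting with `H`
moves across `exp (z • H)` at the cost of `z ↦ -z`, while a commuting one moves across freely;
the same holds for `X`. Conjugating `E` by the three factors of `U(t)` one at a time therefore
gives `exp (-2iω_H t H) E = cos (2ω_H t) E - i sin (2ω_H t) H E`, then rotates `H E` (which
anticommutes with `X`) into `cos (2ωt) H E - i sin (2ωt) X H E`, and finally turns `E` and `H E`
into `exp (2i θ̄ H) E` and `exp (2i θ̄ H) H E` while fixing `X H E`, which commutes with `H`.
-/

open NormedSpace Complex Matrix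

section InvolutionExp

variable {𝔸 : Type*} [NormedRing 𝔸] [NormedAlgebra ℂ 𝔸] [CompleteSpace 𝔸] {a b : 𝔸}

theorem NormedSpace.exp_smul_of_mul_self_eq_one (ha : a * a = 1) (z : ℂ) :
    exp (z • a) = cosh z • (1 : 𝔸) + sinh z • a := by
  have hpow : ∀ k, a ^ (2 * k) = 1 := fun k => by rw [pow_mul, sq, ha, one_pow]
  refine (exp_series_hasSum_exp' (𝕂 := ℂ) (z • a)).unique (HasSum.even_add_odd ?_ ?_)
  · convert (hasSum_cosh z).smul_const (1 : 𝔸) using 2 with k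
    rw [smul_pow, hpow, smul_smul, div_eq_inv_mul]
  · convert (hasSum_sinh z).smul_const a using 2 with k
    rw [smul_pow, pow_succ a, hpow, one_mul, smul_smul, div_eq_inv_mul]

theorem NormedSpace.exp_I_mul_smul_of_mul_self_eq_one (ha : a * a = 1) (r : ℝ) :
    exp ((I * r) • a) = (Real.cos r : ℂ) • (1 : 𝔸) + (I * Real.sin r) • a := by
  rw [exp_smul_of_mul_self_eq_one ha, mul_comm, cosh_mul_I, sinh_mul_I, ofReal_cos, ofReal_sin,
    mul_comm]

theorem NormedSpace.exp_smul_mul_exp_smul_of_mul_self_eq_one (ha : a * a = 1) (z w : ℂ) :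
    exp (z • a) * exp (w • a) = exp ((z + w) • a) := by
  simp only [exp_smul_of_mul_self_eq_one ha, cosh_add, sinh_add, add_mul, mul_add,
    smul_mul_smul_comm, mul_one, one_mul, ha]
  match_scalars <;> ring

theorem NormedSpace.mul_exp_smul_of_anticommute (ha : a * a = 1) (hba : b * a = -(a * b))
    (z : ℂ) : b * exp (z • a) = exp ((-z) • a) * b := by
  rw [exp_smul_of_mul_self_eq_one ha, exp_smul_of_mul_self_eq_one ha, cosh_neg, sinh_neg]
  simp only [mul_add, add_mul, mul_smul_comm, smul_mul_assoc, mul_one, one_mul, hba, neg_smul,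
    neg_mul, smul_neg]

theorem NormedSpace.exp_smul_mul_mul_exp_neg_smul_of_anticommute (ha : a * a = 1)
    (hba : b * a = -(a * b)) (z : ℂ) :
    exp (z • a) * b * exp ((-z) • a) = exp ((2 * z) • a) * b := by
  rw [mul_assoc, mul_exp_smul_of_anticommute ha hba, neg_neg, ← mul_assoc,
    exp_smul_mul_exp_smul_of_mul_self_eq_one ha, two_mul]

theorem NormedSpace.exp_smul_mul_mul_exp_neg_smul_of_commute (ha : a * a = 1)
    (hab : Commute a b) (z : ℂ) : exp (z • a) * b * exp ((-z) • a) = b := by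
  rw [mul_assoc, ← ((hab.smul_left (-z)).exp_left).eq, ← mul_assoc,
    exp_smul_mul_exp_smul_of_mul_self_eq_one ha, add_neg_cancel, zero_smul, exp_zero, one_mul]

theorem NormedSpace.star_exp_smul_of_mul_self_eq_one [StarRing 𝔸] [StarModule ℂ 𝔸]
    (ha : a * a = 1) (hsa : star a = a) (z : ℂ) :
    star (exp (z • a)) = exp ((starRingEnd ℂ z) • a) := by
  simp only [exp_smul_of_mul_self_eq_one ha, star_add, star_smul, star_one, hsa]
  rw [cosh_conj, sinh_conj]
  rfl

theorem NormedSpace.exp_neg_I_mul_smul_mul_mul_exp_I_mul_smul_of_anticommute (ha : a * a = 1)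
    (hba : b * a = -(a * b)) (r : ℝ) :
    exp ((-(I * r)) • a) * b * exp ((I * r) • a)
      = (Real.cos (2 * r) : ℂ) • b - (I * Real.sin (2 * r)) • (a * b) := by
  have := exp_smul_mul_mul_exp_neg_smul_of_anticommute ha hba (-(I * r))
  rw [neg_neg] at this
  rw [this, show 2 * -(I * r) = I * ((-(2 * r) : ℝ) : ℂ) by push_cast; ring,
    exp_I_mul_smul_of_mul_self_eq_one ha, Real.cos_neg, Real.sin_neg]
  simp only [add_mul, smul_mul_assoc, one_mul, ofReal_neg]
  module

end InvolutionExp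

section Rotation

variable {𝔸 : Type*} [NormedRing 𝔸] [NormedAlgebra ℂ 𝔸] [CompleteSpace 𝔸] [StarRing 𝔸]
  [StarModule ℂ 𝔸] {h x e : 𝔸}

theorem NormedSpace.star_mul_mul_eq_of_anticommute_of_commute (hh : h * h = 1) (hx : x * x = 1)
    (hsh : star h = h) (hsx : star x = x) (hhx : h * x = -(x * h)) (heh : e * h = -(h * e))
    (hex : Commute e x) (r₁ r₂ r₃ : ℝ) {u : 𝔸}
    (hu : u = exp ((I * r₁) • h) * exp ((I * r₂) • x) * exp ((-(I * r₃)) • h)) :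
    star u * e * u
      = (Real.cos (2 * r₁) : ℂ) • (exp ((2 * I * r₃) • h) * e)
        + ((Real.sin (2 * r₁) * Real.sin (2 * r₂) : ℝ) : ℂ) • (e * x * h)
        + (I * ((Real.sin (2 * r₁) * Real.cos (2 * r₂) : ℝ) : ℂ)) •
          (exp ((2 * I * r₃) • h) * e * h) := by
  have hconj : ∀ r : ℝ, starRingEnd ℂ (I * r) = -(I * r) := fun r => by
    rw [map_mul, conj_I, conj_ofReal, neg_mul]
  have hstar : star u = exp ((I * r₃) • h) * exp ((-(I * r₂)) • x) * exp ((-(I * r₁)) • h) := by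
    rw [hu, star_mul, star_mul, star_exp_smul_of_mul_self_eq_one hh hsh,
      star_exp_smul_of_mul_self_eq_one hx hsx, star_exp_smul_of_mul_self_eq_one hh hsh, map_neg,
      hconj, hconj, hconj, neg_neg, mul_assoc]
  have hhe_x : h * e * x = -(x * (h * e)) := by
    rw [mul_assoc, hex.eq, ← mul_assoc, hhx, neg_mul, mul_assoc]
  have hhe_h : h * e * h = -(h * (h * e)) := by rw [mul_assoc, heh, mul_neg]
  have hxhe_h : Commute h (x * (h * e)) := by
    calc h * (x * (h * e)) = h * x * h * e := by simp only [mul_assoc]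
      _ = -(x * e) := by rw [hhx, neg_mul, neg_mul, mul_assoc x h h, hh, mul_one]
      _ = x * (h * (e * h)) := by rw [heh, mul_neg, ← mul_assoc h h, hh, one_mul, mul_neg]
      _ = x * (h * e) * h := by simp only [mul_assoc]
  have hreassoc : star u * e * u = exp ((I * r₃) • h) * (exp ((-(I * r₂)) • x) *
      (exp ((-(I * r₁)) • h) * e * exp ((I * r₁) • h)) * exp ((I * r₂) • x)) *
      exp ((-(I * r₃)) • h) := by
    rw [hstar, hu]; simp only [mul_assoc]
  rw [hreassoc, exp_neg_I_mul_smul_mul_mul_exp_I_mul_smul_of_anticommute hh heh]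
  simp only [mul_sub, sub_mul, mul_smul_comm, smul_mul_assoc]
  have hxe := exp_smul_mul_mul_exp_neg_smul_of_commute hx hex.symm (-(I * r₂))
  rw [neg_neg] at hxe
  rw [hxe, exp_neg_I_mul_smul_mul_mul_exp_I_mul_smul_of_anticommute hx hhe_x]
  simp only [mul_sub, sub_mul, mul_smul_comm, smul_mul_assoc]
  rw [exp_smul_mul_mul_exp_neg_smul_of_anticommute hh heh,
    exp_smul_mul_mul_exp_neg_smul_of_anticommute hh hhe_h,
    exp_smul_mul_mul_exp_neg_smul_of_commute hh hxhe_h,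
    ← mul_assoc 2 I, mul_assoc (exp _) e h, heh, mul_neg, hex.eq, mul_assoc x e h, heh, mul_neg]
  push_cast
  match_scalars
  · ring
  · ring
  · linear_combination sin (2 * (r₁ : ℂ)) * sin (2 * (r₂ : ℂ)) * I_sq

end Rotation

theorem rotated_error_class2_general {N : ℕ}
    (H X : Matrix (Fin N) (Fin N) ℂ)
    (hHh : Hᴴ = H) (hXh : Xᴴ = X)
    (hH2 : H * H = 1) (hX2 : X * X = 1) (hHX : H * X = -(X * H))
    (ω ωH : ℝ)
    (θbar : ℝ → ℝ)
    (V U : ℝ → Matrix (Fin N) (Fin N) ℂ)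
    (hV : ∀ t : ℝ, V t = NormedSpace.exp ((Complex.I * (ωH * t)) • H) *
      NormedSpace.exp ((Complex.I * (ω * t)) • X))
    (hU : ∀ t : ℝ, U t = V t * NormedSpace.exp ((-(Complex.I * (θbar t : ℝ))) • H))
    (E : Matrix (Fin N) (Fin N) ℂ)
    (hEH : E * H = -(H * E)) (hEX : E * X = X * E)
    (Et : ℝ → Matrix (Fin N) (Fin N) ℂ)
    (hEt : ∀ t : ℝ, Et t = (U t)ᴴ * E * U t) :
    ∀ t : ℝ, Et t
      = ((Real.cos (2 * ωH * t) : ℝ) : ℂ) •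
          (NormedSpace.exp ((2 * Complex.I * (θbar t : ℝ)) • H) * E)
        + ((Real.sin (2 * ωH * t) * Real.sin (2 * ω * t) : ℝ) : ℂ) • (E * X * H)
        + (Complex.I * ((Real.sin (2 * ωH * t) * Real.cos (2 * ω * t) : ℝ) : ℂ)) •
          (NormedSpace.exp ((2 * Complex.I * (θbar t : ℝ)) • H) * E * H) := by
  intro t
  -- the `rfl`s below identify the `ℂ`-action of this algebra structure with `Matrix.smul`
  let _ : NormedRing (Matrix (Fin N) (Fin N) ℂ) := Matrix.linftyOpNormedRing
  let _ : NormedAlgebra ℂ (Matrix (Fin N) (Fin N) ℂ) := Matrix.linftyOpNormedAlgebra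
  have hUt : U t = exp ((I * ↑(ωH * t)) • H) * exp ((I * ↑(ω * t)) • X) *
      exp ((-(I * θbar t)) • H) := by
    rw [hU, hV]; push_cast; rfl
  rw [hEt t, ← star_eq_conjTranspose,
    star_mul_mul_eq_of_anticommute_of_commute hH2 hX2 hHh hXh hHX hEH hEX _ _ _ hUt,
    mul_assoc 2 ωH t, mul_assoc 2 ω t]
  rfl

/-- Rotated error, class-2 case: for `E` anticommuting with `H` and commuting with `X`,
the rotated error `E(t) = U(t)ᴴ·E·U(t)` decomposes as
`cos(2ω_H t)·exp(2i θ̄(t) H)·E + sin(2ω_H t)·sin(2ωt)·E·X·H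
  + i·sin(2ω_H t)·cos(2ωt)·exp(2i θ̄(t) H)·E·H`. -/
theorem rotated_error_class2 {N : ℕ} (hN : 0 < N)
    (H X : Matrix (Fin N) (Fin N) ℂ)
    (hHh : Hᴴ = H) (hXh : Xᴴ = X)
    (hH2 : H * H = 1) (hX2 : X * X = 1) (hHX : H * X = -(X * H))
    (ω θ ωH : ℝ) (hω : 0 < ω) (hωH : ωH = θ * ω / (2 * Real.pi))
    (θbar : ℝ → ℝ) (hθbar : ∀ t, θbar t = θ / (4 * Real.pi) * Real.sin (2 * ω * t))
    (V U : ℝ → Matrix (Fin N) (Fin N) ℂ)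
    (hV : ∀ t : ℝ, V t = NormedSpace.exp ((Complex.I * (ωH * t)) • H) *
      NormedSpace.exp ((Complex.I * (ω * t)) • X))
    (hU : ∀ t : ℝ, U t = V t * NormedSpace.exp ((-(Complex.I * (θbar t : ℝ))) • H))
    (E : Matrix (Fin N) (Fin N) ℂ)
    (hEH : E * H = -(H * E)) (hEX : E * X = X * E)
    (Et : ℝ → Matrix (Fin N) (Fin N) ℂ)
    (hEt : ∀ t : ℝ, Et t = (U t)ᴴ * E * U t) :
    ∀ t : ℝ, Et t
      = ((Real.cos (2 * ωH * t) : ℝ) : ℂ) •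
          (NormedSpace.exp ((2 * Complex.I * (θbar t : ℝ)) • H) * E)
        + ((Real.sin (2 * ωH * t) * Real.sin (2 * ω * t) : ℝ) : ℂ) • (E * X * H)
        + (Complex.I * ((Real.sin (2 * ωH * t) * Real.cos (2 * ω * t) : ℝ) : ℂ)) •
          (NormedSpace.exp ((2 * Complex.I * (θbar t : ℝ)) • H) * E * H) :=
  rotated_error_class2_general H X hHh hXh hH2 hX2 hHX ω ωH θbar V U hV hU E hEH hEX Et hEt
end

section
/- (Projection probability, class-2 case.) Let E be a Hermitian N×N matrix with E² = I, E·H = −H·E and E·X = X·E, and let ψ̄ be a unit vector with P0·ψ̄ = ψ̄. Then for all t, the probability of projecting the rotated error state onto the E-syndrome space satisfies ⟨E(t)·ψ̄, (E·P0·E)·E(t)·ψ̄⟩ = 1 − sin²(2ω_H t)·sin²(2ωt), where E(t) = U(t)†·E·U(t). -/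
/-!
For an involution `A` of a complex algebra, `ofInvolution A : ℂ →ₐ[ℝ] R` sends `i` to `i • A`; it
is continuous, so `exp (i r A) = ofInvolution A (e^{ir})` and `U(t)` is a product
`φ_H(a) φ_X(b) φ_H(c)` with `a = e^{i ω_H t}`, `b = e^{i ω t}`, `c = e^{-i θ̄(t)}`.
Conjugation by `E` conjugates the arguments of the `H`-factors and fixes the `X`-factor, so
`E · E(t) = φ_H(c) (φ_X(b̄) φ_H(a²) φ_X(b)) φ_H(c)`. Pushing `φ_X(b̄)` through `H` turns the middle
factor into `φ_H(v)` minus a multiple of `H X`, where `v = cos 2ω_H t + i sin 2ω_H t cos 2ωt`.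
The `H X` term is killed by `P0 · _ · P0`, hence `P0 · E · E(t) · P0 = φ_H(c² v) · P0`, and the
probability is `|c² v|² = |v|² = 1 - sin²(2ω_H t) sin²(2ωt)`: the phase `θ̄` drops out.
-/

open Complex ComplexConjugate

section ofInvolution

variable {R : Type*} [Ring R] [Algebra ℂ R] {H : R}

noncomputable def ofInvolution (H : R) (hH : H * H = 1) : ℂ →ₐ[ℝ] R :=
  Complex.lift ⟨I • H, by rw [smul_mul_smul, I_mul_I, hH, neg_one_smul]⟩

variable (hH : H * H = 1)

theorem ofInvolution_apply (z : ℂ) :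
    ofInvolution H hH z = (z.re : ℂ) • 1 + (z.im * I) • H := by
  simp [ofInvolution, Algebra.algebraMap_eq_smul_one, mul_smul]

theorem ofInvolution_ofReal (r : ℝ) : ofInvolution H hH r = (r : ℂ) • 1 := by
  rw [ofInvolution_apply]
  simp

theorem ofInvolution_ofReal_mul_I (r : ℝ) : ofInvolution H hH (r * I) = (I * r) • H := by
  simp [ofInvolution_apply, mul_comm]

theorem Commute.ofInvolution {E : R} (h : Commute E H) (z : ℂ) :
    Commute E (ofInvolution H hH z) := by
  rw [ofInvolution_apply]
  exact ((Commute.one_right E).smul_right _).add_right (h.smul_right _)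

theorem mul_ofInvolution_of_anticommute {E : R} (h : E * H = -(H * E)) (z : ℂ) :
    E * ofInvolution H hH z = ofInvolution H hH (conj z) * E := by
  simp only [ofInvolution_apply, mul_add, add_mul, mul_smul_comm, smul_mul_assoc, mul_one,
    one_mul, h, conj_re, conj_im, ofReal_neg, smul_neg, neg_mul, neg_smul]

theorem star_ofInvolution [StarRing R] [StarModule ℂ R] (h : star H = H) (z : ℂ) :
    star (ofInvolution H hH z) = ofInvolution H hH (conj z) := by
  simp [ofInvolution_apply, star_smul, h]

theorem star_ofInvolution_mul_self [StarRing R] [StarModule ℂ R] (h : star H = H) (z : ℂ) :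
    star (ofInvolution H hH z) * ofInvolution H hH z = (normSq z : ℂ) • 1 := by
  rw [star_ofInvolution hH h, ← map_mul, ← normSq_eq_conj_mul_self, ofInvolution_ofReal]

theorem continuous_ofInvolution [TopologicalSpace R] [IsTopologicalRing R] [ContinuousSMul ℂ R] :
    Continuous (ofInvolution H hH) := by
  simp only [funext (ofInvolution_apply hH)]
  fun_prop

theorem exp_I_smul_eq_ofInvolution {R : Type*} [NormedRing R] [NormedAlgebra ℂ R]
    [CompleteSpace R] {H : R} (hH : H * H = 1) (r : ℝ) :
    NormedSpace.exp ((I * r) • H) = ofInvolution H hH (exp (r * I)) := by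
  -- `NormedSpace.map_exp` asks for some `ℚ`-algebra structure; `exp` does not depend on which.
  let : Algebra ℚ R := Algebra.compHom R (algebraMap ℚ ℂ)
  rw [← ofInvolution_ofReal_mul_I hH, exp_eq_exp_ℂ,
    NormedSpace.map_exp _ (continuous_ofInvolution hH)]

theorem Matrix.exp_I_smul_eq_ofInvolution {n : Type*} [Fintype n] [DecidableEq n]
    {H : Matrix n n ℂ} (hH : H * H = 1) (r : ℝ) :
    NormedSpace.exp ((I * r) • H) = ofInvolution H hH (exp (r * I)) := by
  let := Matrix.linftyOpNormedRing (n := n) (α := ℂ)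
  let := Matrix.linftyOpNormedAlgebra (n := n) (R := ℂ) (α := ℂ)
  exact _root_.exp_I_smul_eq_ofInvolution hH r

end ofInvolution

section AnticommutingInvolutions

variable {R : Type*} [Ring R] [Algebra ℂ R] {H X : R} (hH : H * H = 1) (hX : X * X = 1)

local notation "φH" => ofInvolution H hH
local notation "φX" => ofInvolution X hX

theorem ofInvolution_conj_mul_mul_ofInvolution (hHX : H * X = -(X * H)) (w b : ℂ)
    (hb : normSq b = 1) :
    φX (conj b) * φH w * φX b
      = φH ⟨w.re, w.im * (b ^ 2).re⟩ - ((w.im * (b ^ 2).im : ℝ) : ℂ) • (H * X) := by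
  have hXb : φX (conj b) * φX b = 1 := by
    rw [← map_mul, ← normSq_eq_conj_mul_self, hb, ofReal_one, map_one]
  have hXH : φX (conj b) * H = H * φX b := by
    rw [← mul_ofInvolution_of_anticommute hX hHX]
  have hbb : φX b * φX b = φX (b ^ 2) := by rw [← map_mul, sq]
  calc φX (conj b) * φH w * φX b
      = (w.re : ℂ) • (φX (conj b) * φX b) + (w.im * I) • (H * (φX b * φX b)) := by
        rw [ofInvolution_apply hH w, mul_add, add_mul, mul_smul_comm, mul_one, smul_mul_assoc,
          mul_smul_comm, smul_mul_assoc, hXH, mul_assoc]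
    _ = _ := by
        rw [hXb, hbb, ofInvolution_apply hX, ofInvolution_apply hH, mul_add, mul_smul_comm,
          mul_smul_comm, mul_one]
        push_cast
        match_scalars
        · ring
        · ring
        · linear_combination (w.im * (b ^ 2).im : ℂ) * I_mul_I

theorem mul_star_mul_mul_eq_ofInvolution [StarRing R] [StarModule ℂ R] (hHs : star H = H)
    (hXs : star X = X) {E : R} (hE2 : E * E = 1) (hEH : E * H = -(H * E)) (hEX : Commute E X) (a b c : ℂ) :
    E * star (φH a * φX b * φH c) * E * (φH a * φX b * φH c)
      = φH c * (φX (conj b) * φH (a ^ 2) * φX b) * φH c := by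
  have hEφH (z : ℂ) (Y : R) : E * (φH z * Y) = φH (conj z) * (E * Y) := by
    rw [← mul_assoc, mul_ofInvolution_of_anticommute hH hEH, mul_assoc]
  have hEφX (z : ℂ) (Y : R) : E * (φX z * Y) = φX z * (E * Y) := by
    rw [← mul_assoc, (hEX.ofInvolution hX z).eq, mul_assoc]
  have hEE (Y : R) : E * (E * Y) = Y := by rw [← mul_assoc, hE2, one_mul]
  have hφHa (Y : R) : φH a * (φH a * Y) = φH (a ^ 2) * Y := by rw [← mul_assoc, ← map_mul, sq]
  simp only [star_mul, star_ofInvolution hH hHs, star_ofInvolution hX hXs, mul_assoc, hEφH, hEφX,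
    hEE, conj_conj, hφHa]

theorem proj_mul_mul_star_mul_mul_proj [StarRing R] [StarModule ℂ R] (hHs : star H = H)
    (hXs : star X = X) (hHX : H * X = -(X * H)) {E : R} (hE2 : E * E = 1)
    (hEH : E * H = -(H * E)) (hEX : Commute E X) {P : R} (hP2 : P * P = P) (hPH : Commute P H)
    (hPHXP : P * H * X * P = 0) (a b c : ℂ) (hb : normSq b = 1) :
    P * (E * star (φH a * φX b * φH c) * E * (φH a * φX b * φH c)) * P
      = φH (c ^ 2 * ⟨(a ^ 2).re, (a ^ 2).im * (b ^ 2).re⟩) * P := by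
  set v : ℂ := ⟨(a ^ 2).re, (a ^ 2).im * (b ^ 2).re⟩
  set k : ℂ := (((a ^ 2).im * (b ^ 2).im : ℝ) : ℂ)
  have hPφ (z : ℂ) : P * φH z = φH z * P := (hPH.ofInvolution hH z).eq
  have hmid : P * (φH v - k • (H * X)) * P = φH v * P := by
    rw [mul_sub, sub_mul, mul_smul_comm, smul_mul_assoc, ← mul_assoc P H X, hPHXP, smul_zero,
      sub_zero, hPφ, mul_assoc, hP2]
  rw [mul_star_mul_mul_eq_ofInvolution hH hX hHs hXs hE2 hEH hEX,
    ofInvolution_conj_mul_mul_ofInvolution hH hX hHX _ _ hb]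
  calc P * (φH c * (φH v - k • (H * X)) * φH c) * P
      = φH c * (P * (φH v - k • (H * X)) * P) * φH c := by
        simp only [← mul_assoc, hPφ]
        simp only [mul_assoc, hPφ]
    _ = φH (c ^ 2 * v) * P := by
        rw [hmid, ← mul_assoc, mul_assoc _ P, hPφ, ← mul_assoc, ← map_mul, ← map_mul]
        ring_nf

theorem star_ofInvolution_mul_mul_ofInvolution_mul [StarRing R] [StarModule ℂ R]
    (hHs : star H = H) {P : R} (hPs : star P = P) (hP2 : P * P = P) (z : ℂ) :
    star (φH z * P) * (φH z * P) = (normSq z : ℂ) • P := by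
  rw [star_mul, hPs, mul_assoc, ← mul_assoc (star _), star_ofInvolution_mul_self hH hHs,
    smul_mul_assoc, one_mul, mul_smul_comm, hP2]

end AnticommutingInvolutions

theorem Complex.normSq_exp_ofReal_mul_I (x : ℝ) : normSq (exp (x * I)) = 1 := by
  rw [normSq_eq_norm_sq, norm_exp_ofReal_mul_I, one_pow]

theorem normSq_exp_sq_mul_mk (α β γ : ℝ) :
    normSq (exp (γ * I) ^ 2 * ⟨(exp (α * I) ^ 2).re, (exp (α * I) ^ 2).im * (exp (β * I) ^ 2).re⟩)
      = 1 - Real.sin (2 * α) ^ 2 * Real.sin (2 * β) ^ 2 := by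
  have hsq (x : ℝ) : exp (x * I) ^ 2 = exp ((2 * x : ℝ) * I) := by
    rw [← exp_nat_mul]
    push_cast
    ring_nf
  rw [hsq, hsq, hsq, normSq_mul, normSq_exp_ofReal_mul_I, one_mul, normSq_mk,
    exp_ofReal_mul_I_re, exp_ofReal_mul_I_im, exp_ofReal_mul_I_re]
  linear_combination Real.sin_sq_add_cos_sq (2 * α) +
    Real.sin (2 * α) ^ 2 * Real.sin_sq_add_cos_sq (2 * β)

namespace Matrix

variable {n : Type*} [Fintype n]

theorem star_mulVec_dotProduct_mulVec_mulVec (A B : Matrix n n ℂ) (v : n → ℂ) :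
    star (A *ᵥ v) ⬝ᵥ (B *ᵥ (A *ᵥ v)) = star v ⬝ᵥ ((Aᴴ * B * A) *ᵥ v) := by
  rw [star_mulVec, ← dotProduct_mulVec, mulVec_mulVec, mulVec_mulVec, mul_assoc]

theorem dotProduct_mulVec_eq_of_mulVec_eq_self {P : Matrix n n ℂ} (hPs : Pᴴ = P) {v : n → ℂ}
    (hPv : P *ᵥ v = v) (Q : Matrix n n ℂ) :
    star v ⬝ᵥ (Q *ᵥ v) = star v ⬝ᵥ ((P * Q * P) *ᵥ v) := by
  conv_lhs => rw [← hPv]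
  rw [star_mulVec, hPs, ← dotProduct_mulVec, mulVec_mulVec, mulVec_mulVec]

end Matrix

open Matrix

theorem projection_probability_class2_general {N : ℕ}
    (H X : Matrix (Fin N) (Fin N) ℂ)
    (hHh : Hᴴ = H) (hXh : Xᴴ = X)
    (hH2 : H * H = 1) (hX2 : X * X = 1) (hHX : H * X = -(X * H))
    (ω ωH : ℝ)
    (θbar : ℝ → ℝ)
    (V U : ℝ → Matrix (Fin N) (Fin N) ℂ)
    (hV : ∀ t : ℝ, V t = NormedSpace.exp ((Complex.I * (ωH * t)) • H) *
      NormedSpace.exp ((Complex.I * (ω * t)) • X))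
    (hU : ∀ t : ℝ, U t = V t * NormedSpace.exp ((-(Complex.I * (θbar t : ℝ))) • H))
    (P0 : Matrix (Fin N) (Fin N) ℂ)
    (hP0proj : P0 * P0 = P0) (hP0herm : P0ᴴ = P0)
    (hP0H : P0 * H = H * P0) (hPHXP : P0 * H * X * P0 = 0)
    (E : Matrix (Fin N) (Fin N) ℂ)
    (hEh : Eᴴ = E) (hE2 : E * E = 1)
    (hEH : E * H = -(H * E)) (hEX : E * X = X * E)
    (Et : ℝ → Matrix (Fin N) (Fin N) ℂ)
    (hEt : ∀ t : ℝ, Et t = (U t)ᴴ * E * U t)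
    (ψ : Fin N → ℂ) (hψ : star ψ ⬝ᵥ ψ = 1) (hPψ : P0 *ᵥ ψ = ψ) :
    ∀ t : ℝ,
      star (Et t *ᵥ ψ) ⬝ᵥ ((E * P0 * E) *ᵥ (Et t *ᵥ ψ))
        = ((1 - Real.sin (2 * ωH * t) ^ 2 * Real.sin (2 * ω * t) ^ 2 : ℝ) : ℂ) := by
  intro t
  have hexp {A : Matrix (Fin N) (Fin N) ℂ} (hA : A * A = 1) (r : ℝ) {z : ℂ} (hz : z = I * r) :
      NormedSpace.exp (z • A) = ofInvolution A hA (exp (r * I)) :=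
    hz ▸ Matrix.exp_I_smul_eq_ofInvolution hA r
  have hUt : U t = ofInvolution H hH2 (exp ((ωH * t : ℝ) * I))
      * ofInvolution X hX2 (exp ((ω * t : ℝ) * I))
      * ofInvolution H hH2 (exp ((-θbar t : ℝ) * I)) := by
    rw [hU, hV, hexp hH2 (ωH * t) (by push_cast; ring), hexp hX2 (ω * t) (by push_cast; ring),
      hexp hH2 (-θbar t) (by push_cast; ring)]
  have hK := proj_mul_mul_star_mul_mul_proj hH2 hX2 hHh hXh hHX hE2 hEH hEX hP0proj hP0H hPHXP
    (exp ((ωH * t : ℝ) * I)) _ (exp ((-θbar t : ℝ) * I)) (normSq_exp_ofReal_mul_I (ω * t))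
  rw [← hUt] at hK
  have hsquare : P0 * ((Et t)ᴴ * (E * P0 * E) * Et t) * P0
      = star (P0 * (E * star (U t) * E * U t) * P0) * (P0 * (E * star (U t) * E * U t) * P0) := by
    simp only [hEt, star_mul, star_eq_conjTranspose, conjTranspose_mul,
      conjTranspose_conjTranspose, hEh, hP0herm, mul_assoc]
    rw [← mul_assoc P0 P0, hP0proj]
  rw [star_mulVec_dotProduct_mulVec_mulVec, dotProduct_mulVec_eq_of_mulVec_eq_self hP0herm hPψ,
    hsquare, hK, star_ofInvolution_mul_mul_ofInvolution_mul hH2 hHh hP0herm hP0proj, smul_mulVec,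
    hPψ, dotProduct_smul, hψ, smul_eq_mul, mul_one, normSq_exp_sq_mul_mk]
  simp only [mul_assoc]

/-- Projection probability, class-2 case: with `E` Hermitian, `E² = 1`, `{E,H} = 0`,
`[E,X] = 0`, and `ψ̄` a unit code vector, the probability of projecting the rotated
error state onto the `E`-syndrome space is
`⟨E(t)ψ̄, (E·P0·E)·E(t)ψ̄⟩ = 1 − sin²(2ω_H t)·sin²(2ωt)`. -/
theorem projection_probability_class2 {N : ℕ} (hN : 0 < N)
    (H X : Matrix (Fin N) (Fin N) ℂ)
    (hHh : Hᴴ = H) (hXh : Xᴴ = X)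
    (hH2 : H * H = 1) (hX2 : X * X = 1) (hHX : H * X = -(X * H))
    (ω θ ωH : ℝ) (hω : 0 < ω) (hωH : ωH = θ * ω / (2 * Real.pi))
    (θbar : ℝ → ℝ) (hθbar : ∀ t, θbar t = θ / (4 * Real.pi) * Real.sin (2 * ω * t))
    (V U : ℝ → Matrix (Fin N) (Fin N) ℂ)
    (hV : ∀ t : ℝ, V t = NormedSpace.exp ((Complex.I * (ωH * t)) • H) *
      NormedSpace.exp ((Complex.I * (ω * t)) • X))
    (hU : ∀ t : ℝ, U t = V t * NormedSpace.exp ((-(Complex.I * (θbar t : ℝ))) • H))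
    (P0 : Matrix (Fin N) (Fin N) ℂ)
    (hP0proj : P0 * P0 = P0) (hP0herm : P0ᴴ = P0)
    (hP0H : P0 * H = H * P0) (hPXP : P0 * X * P0 = 0) (hPHXP : P0 * H * X * P0 = 0)
    (E : Matrix (Fin N) (Fin N) ℂ)
    (hEh : Eᴴ = E) (hE2 : E * E = 1)
    (hEH : E * H = -(H * E)) (hEX : E * X = X * E)
    (Et : ℝ → Matrix (Fin N) (Fin N) ℂ)
    (hEt : ∀ t : ℝ, Et t = (U t)ᴴ * E * U t)
    (ψ : Fin N → ℂ) (hψ : star ψ ⬝ᵥ ψ = 1) (hPψ : P0 *ᵥ ψ = ψ) :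
    ∀ t : ℝ,
      star (Et t *ᵥ ψ) ⬝ᵥ ((E * P0 * E) *ᵥ (Et t *ᵥ ψ))
        = ((1 - Real.sin (2 * ωH * t) ^ 2 * Real.sin (2 * ω * t) ^ 2 : ℝ) : ℂ) :=
  projection_probability_class2_general H X hHh hXh hH2 hX2 hHX ω ωH θbar V U hV hU P0 hP0proj
    hP0herm hP0H hPHXP E hEh hE2 hEH hEX Et hEt ψ hψ hPψ
end

section
/- (Projected component in the EX-syndrome space, class-1 case.) Let E be a Hermitian N×N matrix with E² = I, E·H = −H·E and E·X = X·E, and let ψ̄ be a unit vector with P0·ψ̄ = ψ̄. Then for all t, (E·X·P0·X·E)·E(t)·ψ̄ = sin(2ω_H t)·sin(2ωt)·E·X·H·ψ̄, where E(t) = U(t)†·E·U(t); i.e., the component of the rotated error state in the EX-syndrome space carries the fixed logical rotation exp(i(π/2)H) = iH. -/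
/-!
For an involution `u`, `exp (i r u) = cos r + i sin r u =: cisOf u r`, so every factor of `U(t)`
is such a rotation. Rotations about `H` flip their angle when moved past `E` or `X`, so
`E(t) = E · R W R` with `R = cisOf H (-θ̄)` and
`W = cisOf X (-ωt) · cisOf H (2ω_H t) · cisOf X (ωt)
  = cos 2ω_H t + i sin 2ω_H t cos 2ωt · H + sin 2ω_H t sin 2ωt · X H`.
Sandwiched as `P0 X (·) P0`, the terms in `span {1, H}` die because
`P0 X P0 = P0 X H P0 = 0`, while `P0 X (X H) P0 = H P0`; the outer factors `R` cancel since they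
commute with `P0` and `H`, which is why `θ̄` drops out.
-/

open Matrix Complex

section Cis

variable {A : Type*} [Ring A] [Algebra ℂ A]

noncomputable def cisOf (u : A) (r : ℝ) : A :=
  (Real.cos r : ℂ) • 1 + ((Real.sin r : ℂ) * I) • u

variable {u v : A}

theorem cisOf_zero (u : A) : cisOf u 0 = 1 := by simp [cisOf]

theorem cisOf_add (hu : u * u = 1) (r s : ℝ) : cisOf u (r + s) = cisOf u r * cisOf u s := by
  simp only [cisOf, mul_add, add_mul, smul_mul_smul_comm, one_mul, mul_one, hu,
    Real.cos_add, Real.sin_add]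
  push_cast
  match_scalars
  · linear_combination (-(Complex.sin r * Complex.sin s)) * I_sq
  · ring

theorem cisOf_mul_cisOf_neg (hu : u * u = 1) (r : ℝ) : cisOf u r * cisOf u (-r) = 1 := by
  rw [← cisOf_add hu, add_neg_cancel, cisOf_zero]

theorem Commute.cisOf_right (h : Commute v u) (r : ℝ) : Commute v (cisOf u r) :=
  ((Commute.one_right v).smul_right _).add_right (h.smul_right _)

theorem mul_cisOf_of_mul_eq_neg (h : v * u = -(u * v)) (r : ℝ) :
    v * cisOf u r = cisOf u (-r) * v := by
  simp only [cisOf, mul_add, add_mul, mul_smul_comm, smul_mul_assoc, h, one_mul, mul_one,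
    Real.cos_neg, Real.sin_neg, Complex.ofReal_neg, neg_mul, neg_smul, smul_neg]

theorem star_cisOf [StarRing A] [StarModule ℂ A] (hu : IsSelfAdjoint u) (r : ℝ) :
    star (cisOf u r) = cisOf u (-r) := by
  simp only [cisOf, star_add, star_smul, star_one, hu.star_eq, Complex.star_def, map_mul,
    Complex.conj_ofReal, Complex.conj_I, Real.cos_neg, Real.sin_neg, Complex.ofReal_neg,
    mul_neg, neg_mul]

theorem exp_I_mul_smul_of_mul_self_eq_one [TopologicalSpace A] [IsTopologicalRing A] [T2Space A]
    [ContinuousSMul ℂ A] (hu : u * u = 1) (r : ℝ) :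
    NormedSpace.exp ((I * r) • u) = cisOf u r := by
  rw [NormedSpace.exp_eq_tsum ℂ]
  refine HasSum.tsum_eq ?_
  have heven : ∀ k : ℕ, u ^ (2 * k) = 1 := fun k => by rw [pow_mul, sq, hu, one_pow]
  have hodd : ∀ k : ℕ, u ^ (2 * k + 1) = u := fun k => by rw [pow_succ, heven, one_mul]
  refine HasSum.even_add_odd ?_ ?_
  · have h := (Complex.hasSum_cos (r : ℂ)).smul_const (1 : A)
    rw [← Complex.ofReal_cos] at h
    convert h using 2 with k
    rw [smul_pow, heven, smul_smul, mul_pow, pow_mul, I_sq]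
    congr 1
    ring
  · have h := ((Complex.hasSum_sin (r : ℂ)).mul_right I).smul_const u
    rw [← Complex.ofReal_sin] at h
    convert h using 2 with k
    rw [smul_pow, hodd, smul_smul]
    congr 1
    rw [mul_pow, pow_succ, pow_succ, pow_mul, pow_mul, I_sq]
    ring

end Cis

section Clifford

variable {A : Type*} [Ring A] [Algebra ℂ A] {H X E P : A}

theorem cisOf_neg_mul_cisOf_mul_cisOf (hX : X * X = 1) (hHX : H * X = -(X * H)) (s b : ℝ) :
    cisOf X (-b) * cisOf H s * cisOf X b =
      (Real.cos s : ℂ) • 1 + (Real.sin s * Real.cos (2 * b) * I : ℂ) • H +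
        (Real.sin s * Real.sin (2 * b) : ℂ) • (X * H) := by
  have hH : H * cisOf X b = cisOf X (-b) * H := mul_cisOf_of_mul_eq_neg hHX b
  have h0 : cisOf X (-b) * cisOf X b = 1 := by simpa using cisOf_mul_cisOf_neg hX (-b)
  have h2b : cisOf X (-b) * cisOf X (-b) = cisOf X (-(2 * b)) := by
    rw [← cisOf_add hX]; ring_nf
  calc cisOf X (-b) * cisOf H s * cisOf X b
      = (Real.cos s : ℂ) • (cisOf X (-b) * cisOf X b) +
          ((Real.sin s : ℂ) * I) • (cisOf X (-b) * (H * cisOf X b)) := by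
        rw [cisOf.eq_1 H s]
        simp only [mul_add, add_mul, mul_smul_comm, smul_mul_assoc, mul_one, mul_assoc]
    _ = _ := by
        rw [h0, hH, ← mul_assoc, h2b]
        simp only [cisOf, add_mul, smul_mul_assoc, one_mul, Real.cos_neg, Real.sin_neg,
          Complex.ofReal_neg, smul_add, smul_smul]
        match_scalars
        · ring
        · ring
        · linear_combination (-(Complex.sin s * Complex.sin (2 * b))) * I_sq

theorem mul_mul_add_smul_mul_eq (hP : P * P = P) (hPH : Commute P H) (hX : X * X = 1)
    (hHX : H * X = -(X * H)) (hPXP : P * X * P = 0) (hPHXP : P * H * X * P = 0) (α β γ : ℂ) :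
    P * X * (α • 1 + β • H + γ • (X * H)) * P = γ • (H * P) := by
  have hPXHP : P * X * H * P = 0 := by
    rw [mul_assoc P X H, ← neg_neg (X * H), ← hHX, mul_neg, neg_mul, ← mul_assoc, hPHXP,
      neg_zero]
  have hPXXHP : P * X * (X * H) * P = H * P := by
    rw [← mul_assoc, mul_assoc P X X, hX, mul_one, hPH.eq, mul_assoc, hP]
  simp only [mul_add, add_mul, mul_smul_comm, smul_mul_assoc, mul_one, hPXP, hPXHP, hPXXHP,
    smul_zero, zero_add]

theorem mul_mul_cisOf_mul_cisOf_mul_eq (hH : H * H = 1) (hPH : Commute P H)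
    (hHX : H * X = -(X * H)) {W : A} {γ : ℂ} (hW : P * X * W * P = γ • (H * P)) (c : ℝ) :
    P * X * (cisOf H (-c) * W * cisOf H (-c)) * P = γ • (H * P) := by
  have hXc : X * cisOf H (-c) = cisOf H c * X := by
    simpa using mul_cisOf_of_mul_eq_neg (neg_eq_iff_eq_neg.mp hHX.symm) (-c)
  calc P * X * (cisOf H (-c) * W * cisOf H (-c)) * P
      = cisOf H c * (P * X * W * P) * cisOf H (-c) := by
        simp only [mul_assoc]
        rw [← (hPH.cisOf_right (-c)).eq, ← mul_assoc X, hXc, mul_assoc, ← mul_assoc P,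
          (hPH.cisOf_right c).eq]
        simp only [mul_assoc]
    _ = γ • (H * P) := by
        rw [hW, mul_smul_comm, smul_mul_assoc]
        simp only [mul_assoc]
        rw [(hPH.cisOf_right (-c)).eq, ← mul_assoc (cisOf H c),
          ← ((Commute.refl H).cisOf_right c).eq, mul_assoc H, ← mul_assoc (cisOf H c),
          cisOf_mul_cisOf_neg hH, one_mul]

theorem cisOf_mul_mul_cisOf_conj (hH : H * H = 1) (hEH : E * H = -(H * E))
    (hEX : Commute E X) (a b c : ℝ) :
    cisOf H c * cisOf X (-b) * cisOf H (-a) * E * (cisOf H a * cisOf X b * cisOf H (-c)) =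
      E * (cisOf H (-c) * (cisOf X (-b) * cisOf H (2 * a) * cisOf X b) * cisOf H (-c)) := by
  have hHE : ∀ r D, cisOf H r * (E * D) = E * (cisOf H (-r) * D) := fun r D => by
    rw [← mul_assoc, ← mul_assoc, mul_cisOf_of_mul_eq_neg hEH, neg_neg]
  have hXE : ∀ D, cisOf X (-b) * (E * D) = E * (cisOf X (-b) * D) := fun D => by
    rw [← mul_assoc, ← mul_assoc, (hEX.cisOf_right _).eq]
  have h2a : ∀ D, cisOf H a * (cisOf H a * D) = cisOf H (2 * a) * D := fun D => by
    rw [← mul_assoc, ← cisOf_add hH, two_mul]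
  simp only [mul_assoc, hHE, hXE, neg_neg, h2a]

theorem mul_conj_mul_eq_sin_mul_sin (hH : H * H = 1) (hX : X * X = 1) (hHX : H * X = -(X * H))
    (hP : P * P = P) (hPH : Commute P H) (hPXP : P * X * P = 0) (hPHXP : P * H * X * P = 0)
    (hE : E * E = 1) (hEH : E * H = -(H * E)) (hEX : Commute E X) (a b c : ℝ) :
    E * X * P * X * E *
        (cisOf H c * cisOf X (-b) * cisOf H (-a) * E * (cisOf H a * cisOf X b * cisOf H (-c))) * P =
      (Real.sin (2 * a) * Real.sin (2 * b) : ℂ) • (E * X * H * P) := by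
  have hW : P * X * (cisOf X (-b) * cisOf H (2 * a) * cisOf X b) * P =
      (Real.sin (2 * a) * Real.sin (2 * b) : ℂ) • (H * P) := by
    rw [cisOf_neg_mul_cisOf_mul_cisOf hX hHX, mul_mul_add_smul_mul_eq hP hPH hX hHX hPXP hPHXP]
  have hEE : ∀ D, E * (E * D) = D := fun D => by rw [← mul_assoc, hE, one_mul]
  rw [cisOf_mul_mul_cisOf_conj hH hEH hEX]
  calc E * X * P * X * E * (E * (cisOf H (-c) * (cisOf X (-b) * cisOf H (2 * a) * cisOf X b) *
          cisOf H (-c))) * P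
      = E * X * (P * X * (cisOf H (-c) * (cisOf X (-b) * cisOf H (2 * a) * cisOf X b) *
          cisOf H (-c)) * P) := by simp only [mul_assoc, hEE]
    _ = _ := by
        rw [mul_mul_cisOf_mul_cisOf_mul_eq hH hPH hHX hW, mul_smul_comm]
        simp only [mul_assoc]

end Clifford

theorem projected_component_EX_general {N : ℕ}
    (H X : Matrix (Fin N) (Fin N) ℂ)
    (hHh : Hᴴ = H) (hXh : Xᴴ = X)
    (hH2 : H * H = 1) (hX2 : X * X = 1) (hHX : H * X = -(X * H))
    (ω ωH : ℝ)
    (θbar : ℝ → ℝ)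
    (V U : ℝ → Matrix (Fin N) (Fin N) ℂ)
    (hV : ∀ t : ℝ, V t = NormedSpace.exp ((Complex.I * (ωH * t)) • H) *
      NormedSpace.exp ((Complex.I * (ω * t)) • X))
    (hU : ∀ t : ℝ, U t = V t * NormedSpace.exp ((-(Complex.I * (θbar t : ℝ))) • H))
    (P0 : Matrix (Fin N) (Fin N) ℂ)
    (hP0proj : P0 * P0 = P0)
    (hP0H : P0 * H = H * P0) (hPXP : P0 * X * P0 = 0) (hPHXP : P0 * H * X * P0 = 0)
    (E : Matrix (Fin N) (Fin N) ℂ)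
    (hE2 : E * E = 1)
    (hEH : E * H = -(H * E)) (hEX : E * X = X * E)
    (Et : ℝ → Matrix (Fin N) (Fin N) ℂ)
    (hEt : ∀ t : ℝ, Et t = (U t)ᴴ * E * U t)
    (ψ : Fin N → ℂ) (hPψ : P0 *ᵥ ψ = ψ) :
    ∀ t : ℝ,
      (E * X * P0 * X * E) *ᵥ (Et t *ᵥ ψ)
        = ((Real.sin (2 * ωH * t) * Real.sin (2 * ω * t) : ℝ) : ℂ) •
            ((E * X * H) *ᵥ ψ) := by
  intro t
  have hUt : U t = cisOf H (ωH * t) * cisOf X (ω * t) * cisOf H (-θbar t) := by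
    simp only [hU, hV, ← ofReal_mul, ← mul_neg, ← ofReal_neg,
      exp_I_mul_smul_of_mul_self_eq_one hH2, exp_I_mul_smul_of_mul_self_eq_one hX2]
  have hUt_star : (U t)ᴴ = cisOf H (θbar t) * cisOf X (-(ω * t)) * cisOf H (-(ωH * t)) := by
    rw [hUt, ← star_eq_conjTranspose, star_mul, star_mul, star_cisOf hHh, star_cisOf hXh,
      star_cisOf hHh, neg_neg, mul_assoc]
  rw [hEt, ← hPψ, mulVec_mulVec, mulVec_mulVec, hUt_star, hUt, mul_assoc 2 ωH, mul_assoc 2 ω,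
    mul_conj_mul_eq_sin_mul_sin hH2 hX2 hHX hP0proj hP0H hPXP hPHXP hE2 hEH hEX, smul_mulVec,
    ← mulVec_mulVec, hPψ, ofReal_mul]

/-- Projected component in the `EX`-syndrome space: with `E` Hermitian, `E² = 1`,
`{E,H} = 0`, `[E,X] = 0`, and `ψ̄` a unit code vector,
`(E·X·P0·X·E)·E(t)·ψ̄ = sin(2ω_H t)·sin(2ωt)·E·X·H·ψ̄` for all `t`. -/
theorem projected_component_EX {N : ℕ} (hN : 0 < N)
    (H X : Matrix (Fin N) (Fin N) ℂ)
    (hHh : Hᴴ = H) (hXh : Xᴴ = X)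
    (hH2 : H * H = 1) (hX2 : X * X = 1) (hHX : H * X = -(X * H))
    (ω θ ωH : ℝ) (hω : 0 < ω) (hωH : ωH = θ * ω / (2 * Real.pi))
    (θbar : ℝ → ℝ) (hθbar : ∀ t, θbar t = θ / (4 * Real.pi) * Real.sin (2 * ω * t))
    (V U : ℝ → Matrix (Fin N) (Fin N) ℂ)
    (hV : ∀ t : ℝ, V t = NormedSpace.exp ((Complex.I * (ωH * t)) • H) *
      NormedSpace.exp ((Complex.I * (ω * t)) • X))
    (hU : ∀ t : ℝ, U t = V t * NormedSpace.exp ((-(Complex.I * (θbar t : ℝ))) • H))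
    (P0 : Matrix (Fin N) (Fin N) ℂ)
    (hP0proj : P0 * P0 = P0) (hP0herm : P0ᴴ = P0)
    (hP0H : P0 * H = H * P0) (hPXP : P0 * X * P0 = 0) (hPHXP : P0 * H * X * P0 = 0)
    (E : Matrix (Fin N) (Fin N) ℂ)
    (hEh : Eᴴ = E) (hE2 : E * E = 1)
    (hEH : E * H = -(H * E)) (hEX : E * X = X * E)
    (Et : ℝ → Matrix (Fin N) (Fin N) ℂ)
    (hEt : ∀ t : ℝ, Et t = (U t)ᴴ * E * U t)
    (ψ : Fin N → ℂ) (hψ : star ψ ⬝ᵥ ψ = 1) (hPψ : P0 *ᵥ ψ = ψ) :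
    ∀ t : ℝ,
      (E * X * P0 * X * E) *ᵥ (Et t *ᵥ ψ)
        = ((Real.sin (2 * ωH * t) * Real.sin (2 * ω * t) : ℝ) : ℂ) •
            ((E * X * H) *ᵥ ψ) :=
  projected_component_EX_general H X hHh hXh hH2 hX2 hHX ω ωH θbar V U hV hU P0 hP0proj hP0H hPXP
    hPHXP E hE2 hEH hEX Et hEt ψ hPψ
end
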